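/- arXiv:2410.00208 — 5 statements merged into one kernel-verified Lean document; each statement's English description precedes it below -/
import Mathlib

section
/- If a set T is RCI and every robust one-step controllable set in a recursively defined family C₀ = T, C_{j+1} = ROSC(C_j) contains its predecessor (C_j ⊆ C_{j+1}), then from any state in C_N there exists a feedback control strategy steering the state into T in at most N steps, robustly with respect to all admissible disturbances. -/
/-- If T is RCI and the recursive ROSC family C₀ = T, C_{j+1} = ROSC(C_j)
is nested (C_j ⊆ C_{j+1}), then from any state in C_N there is a feedback strategy steering
the state into T in at most N steps, robustly w.r.t. all admissible disturbances. -/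
theorem rosc_family_finite_time_reach
    {n m : ℕ} (Φ : Matrix (Fin n) (Fin n) ℝ) (G : Matrix (Fin n) (Fin m) ℝ)
    (Z T : Set (Fin n → ℝ)) (U : Set (Fin m → ℝ)) (P : Set (Fin n → ℝ))
    (hTZ : T ⊆ Z)
    (hRCI : ∀ z ∈ T, ∃ μ ∈ U, ∀ p ∈ P, Φ.mulVec z + G.mulVec μ + p ∈ T)
    (C : ℕ → Set (Fin n → ℝ)) (hC0 : C 0 = T)
    (hCrec : ∀ j, C (j + 1) =
      {z ∈ Z | ∃ μ ∈ U, ∀ p ∈ P, Φ.mulVec z + G.mulVec μ + p ∈ C j})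
    (hnested : ∀ j, C j ⊆ C (j + 1)) (N : ℕ) :
    ∀ z₀ ∈ C N, ∃ κ : (Fin n → ℝ) → (Fin m → ℝ),
      ∀ pseq : ℕ → (Fin n → ℝ), (∀ k, pseq k ∈ P) →
        ∀ z : ℕ → (Fin n → ℝ), z 0 = z₀ →
          (∀ k, z (k + 1) = Φ.mulVec (z k) + G.mulVec (κ (z k)) + pseq k) →
          (∀ k, κ (z k) ∈ U) ∧ ∃ k ≤ N, z k ∈ T := by
  classical
  intro z₀ hz₀
  -- monotonicity of the family
  have hmono : ∀ i j : ℕ, i ≤ j → C i ⊆ C j := by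
    intro i j hij
    induction j with
    | zero => simpa [Nat.le_zero.mp hij] using Set.Subset.rfl
    | succ j ih =>
      rcases Nat.lt_or_ge i (j + 1) with h | h
      · exact (ih (Nat.lt_succ_iff.mp h)).trans (hnested j)
      · have : i = j + 1 := le_antisymm hij h
        simp [this]
  -- choice of a control for each reachable state
  have H : ∀ w : Fin n → ℝ, ∃ μ : Fin m → ℝ, (∃ j, w ∈ C j) →
      μ ∈ U ∧ ∀ j, w ∈ C j → ∀ p ∈ P, Φ.mulVec w + G.mulVec μ + p ∈ C (j - 1) := by
    intro w
    by_cases h : ∃ j, w ∈ C j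
    · have hw : w ∈ C (Nat.find h) := Nat.find_spec h
      have key : ∃ μ ∈ U, ∀ p ∈ P,
          Φ.mulVec w + G.mulVec μ + p ∈ C (Nat.find h - 1) := by
        cases hj : Nat.find h with
        | zero =>
          rw [hj, hC0] at hw
          obtain ⟨μ, hμU, hμ⟩ := hRCI w hw
          exact ⟨μ, hμU, fun p hp => by simpa [hj, hC0] using hμ p hp⟩
        | succ i =>
          rw [hj, hCrec i] at hw
          obtain ⟨_, μ, hμU, hμ⟩ := hw
          exact ⟨μ, hμU, fun p hp => by simpa [hj] using hμ p hp⟩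
      obtain ⟨μ, hμU, hμ⟩ := key
      refine ⟨μ, fun _ => ⟨hμU, fun j hj p hp => ?_⟩⟩
      have hle : Nat.find h ≤ j := Nat.find_min' h hj
      exact hmono _ _ (Nat.sub_le_sub_right hle 1) (hμ p hp)
    · exact ⟨0, fun h' => absurd h' h⟩
  choose κ hκ using H
  refine ⟨κ, fun pseq hp z hz0 hrec => ?_⟩
  -- the invariant: z k ∈ C (N - k)
  have hinv : ∀ k, z k ∈ C (N - k) := by
    intro k
    induction k with
    | zero => simpa [hz0] using hz₀
    | succ k ih =>
      have h' : ∃ j, z k ∈ C j := ⟨N - k, ih⟩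
      have := (hκ (z k) h').2 (N - k) ih (pseq k) (hp k)
      rw [hrec k]
      simpa [Nat.sub_sub] using this
  constructor
  · intro k
    exact (hκ (z k) ⟨N - k, hinv k⟩).1
  · exact ⟨N, le_rfl, by simpa [hC0] using hinv N⟩
end

section
/- The intersection over a finite set of matrix pairs (Â_i, B̂_i) of the sets {(x,u) : Â_i x + B̂_i u ∈ C̃, x ∈ X, u ∈ U}, where C̃ is the erosion of C by W, is contained in the true augmented robust one-step controllable set {(x,u) ∈ X × U : Ax + Bu + w ∈ C ∀ w ∈ W}, provided [A,B] is a convex combination of the vertices (Â_i, B̂_i) and C is convex. -/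
lemma sum_mulVec' {n k N : ℕ} (s : Finset (Fin N)) (M : Fin N → Matrix (Fin n) (Fin k) ℝ)
    (x : Fin k → ℝ) : (∑ i ∈ s, M i).mulVec x = ∑ i ∈ s, (M i).mulVec x := by
  induction s using Finset.cons_induction with
  | empty => simp
  | cons a s ha ih => rw [Finset.sum_cons, Finset.sum_cons, Matrix.add_mulVec, ih]

/-- The intersection over finitely many vertex matrix pairs (Â_i, B̂_i) of
{(x,u) : Â_i x + B̂_i u ∈ C̃, x ∈ X, u ∈ U} (C̃ the erosion of C by W) is contained in the
true augmented ROSC set {(x,u) ∈ X × U : Ax + Bu + w ∈ C ∀ w ∈ W}, provided [A,B] is a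
convex combination of the vertices and C is convex. -/
theorem vertex_intersection_subset_augmented_rosc
    {n m N : ℕ} (A : Matrix (Fin n) (Fin n) ℝ) (B : Matrix (Fin n) (Fin m) ℝ)
    (Ah : Fin N → Matrix (Fin n) (Fin n) ℝ) (Bh : Fin N → Matrix (Fin n) (Fin m) ℝ)
    (lam : Fin N → ℝ) (hlam : ∀ i, 0 ≤ lam i) (hsum : ∑ i, lam i = 1)
    (hA : A = ∑ i, lam i • Ah i) (hB : B = ∑ i, lam i • Bh i)
    (X : Set (Fin n → ℝ)) (U : Set (Fin m → ℝ))
    (C W : Set (Fin n → ℝ)) (hC : Convex ℝ C) :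
    (⋂ i : Fin N,
      {p : (Fin n → ℝ) × (Fin m → ℝ) | p.1 ∈ X ∧ p.2 ∈ U ∧
        (Ah i).mulVec p.1 + (Bh i).mulVec p.2 ∈ {z | ∀ w ∈ W, z + w ∈ C}}) ⊆
    {p : (Fin n → ℝ) × (Fin m → ℝ) | p.1 ∈ X ∧ p.2 ∈ U ∧
      ∀ w ∈ W, A.mulVec p.1 + B.mulVec p.2 + w ∈ C} := by
  intro p hp
  simp only [Set.mem_iInter, Set.mem_setOf_eq] at hp
  have hN : N ≠ 0 := by rintro rfl; simp at hsum
  have i0 : Fin N := ⟨0, Nat.pos_of_ne_zero hN⟩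
  refine ⟨(hp i0).1, (hp i0).2.1, ?_⟩
  intro w hw
  have key : A.mulVec p.1 + B.mulVec p.2 + w
      = ∑ i, lam i • ((Ah i).mulVec p.1 + (Bh i).mulVec p.2 + w) := by
    subst hA hB
    simp only [sum_mulVec', Matrix.smul_mulVec, smul_add,
      Finset.sum_add_distrib, ← Finset.sum_smul, hsum, one_smul]
  rw [key]
  exact hC.sum_mem (fun i _ => hlam i) hsum (fun i _ => (hp i).2.2 w hw)
end

section
/- The Pontryagin difference of a polyhedron C = {z : Hz ≤ h} by a compact set W equals {z : Hz ≤ h̃} where the r-th component of h̃ is h_r − max_{w ∈ W} H_r w (equivalently h̃_r = min_{w ∈ W}(h_r − H_r w)). -/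
open Matrix

/-- The Pontryagin difference of the polyhedron C = {z : ∀ r, H_r ⬝ z ≤ h_r}
by a nonempty compact set W equals {z : ∀ r, H_r ⬝ z ≤ h_r − max_{w ∈ W} H_r ⬝ w}. -/
theorem pontryagin_difference_polyhedron
    {n r : ℕ} (H : Fin r → (Fin n → ℝ)) (h : Fin r → ℝ)
    (W : Set (Fin n → ℝ)) (hWc : IsCompact W) (hWne : W.Nonempty) :
    {z : Fin n → ℝ | ∀ w ∈ W, z + w ∈ {y : Fin n → ℝ | ∀ i, H i ⬝ᵥ y ≤ h i}} =
      {z : Fin n → ℝ | ∀ i, H i ⬝ᵥ z ≤ h i - sSup ((fun w => H i ⬝ᵥ w) '' W)} := by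
  ext z
  have hcont : ∀ i : Fin r, Continuous fun w : Fin n → ℝ => H i ⬝ᵥ w := by
    intro i
    simp only [dotProduct]
    exact continuous_finset_sum _ fun j _ => (continuous_const.mul (continuous_apply j))
  constructor
  · intro hz i
    rw [le_sub_iff_add_le, add_comm, ← le_sub_iff_add_le]
    refine csSup_le (hWne.image _) ?_
    rintro x ⟨w, hw, rfl⟩
    have := hz w hw i
    rw [dotProduct_add] at this
    linarith
  · intro hz w hw i
    rw [dotProduct_add]
    have hbdd : BddAbove ((fun w => H i ⬝ᵥ w) '' W) :=
      (hWc.image (hcont i)).bddAbove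
    have hle : H i ⬝ᵥ w ≤ sSup ((fun w => H i ⬝ᵥ w) '' W) :=
      le_csSup hbdd ⟨w, hw, rfl⟩
    have := hz i
    linarith
end

section
/- Suppose X_η is covered by a finite family of sets {C_j^l} (over Voronoi partitions l and indices j = 0,…,N_l) where C_0^l is RCI for a local controller and each C_j^l is robust one-step controllable to C_{j−1}^l. Then, for any state x ∈ X_η, the set-theoretic emergency controller steers the state into some RCI set C_0^l in at most max_l N_l steps, robustly against all disturbances in W, while keeping the state in X_η at all intermediate times. -/
/-- If X_η is covered by a finite family {C_j^l} where each C_0^l ⊆ X_η is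
RCI and each C_j^l ⊆ X_η is robust one-step controllable to C_{j−1}^l, then from any
x₀ ∈ X_η the set-theoretic emergency controller (a state feedback) steers the state into
some RCI set C_0^l in at most max_l N_l steps, robustly against all disturbances in W,
keeping the state in X_η at all intermediate times. -/
theorem emergency_controller_finite_time_safety
    {n m L : ℕ} (hL : 0 < L)
    (A : Matrix (Fin n) (Fin n) ℝ) (B : Matrix (Fin n) (Fin m) ℝ)
    (X Xη : Set (Fin n → ℝ)) (hXη : Xη ⊆ X)
    (U : Set (Fin m → ℝ)) (W : Set (Fin n → ℝ))
    (N : Fin L → ℕ) (C : (l : Fin L) → ℕ → Set (Fin n → ℝ))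
    (hC0sub : ∀ l, C l 0 ⊆ Xη)
    (hRCI : ∀ l, ∀ x ∈ C l 0, ∃ u ∈ U, ∀ w ∈ W, A.mulVec x + B.mulVec u + w ∈ C l 0)
    (hCsub : ∀ l, ∀ j, 1 ≤ j → j ≤ N l → C l j ⊆ Xη)
    (hROSC : ∀ l, ∀ j, 1 ≤ j → j ≤ N l → ∀ x ∈ C l j,
      ∃ u ∈ U, ∀ w ∈ W, A.mulVec x + B.mulVec u + w ∈ C l (j - 1))
    (hcover : Xη ⊆ ⋃ l : Fin L, ⋃ j ∈ Finset.range (N l + 1), C l j) :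
    ∀ x₀ ∈ Xη, ∃ κ : (Fin n → ℝ) → (Fin m → ℝ),
      ∀ w : ℕ → (Fin n → ℝ), (∀ k, w k ∈ W) →
        ∀ x : ℕ → (Fin n → ℝ), x 0 = x₀ →
          (∀ k, x (k + 1) = A.mulVec (x k) + B.mulVec (κ (x k)) + w k) →
          (∀ k, κ (x k) ∈ U) ∧
          ∃ k ≤ Finset.univ.sup N, (∃ l, x k ∈ C l 0) ∧ ∀ k' ≤ k, x k' ∈ Xη := by
  classical
  intro x₀ hx₀
  -- every point of Xη lies in some C l j with j ≤ N l
  have hP : ∀ x ∈ Xη, ∃ j, ∃ l, j ≤ N l ∧ x ∈ C l j := by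
    intro x hx
    have := hcover hx
    simp only [Set.mem_iUnion, Finset.mem_range] at this
    obtain ⟨l, j, hj, hxC⟩ := this
    exact ⟨j, l, Nat.lt_succ_iff.mp hj, hxC⟩
  -- rank function
  set r : (Fin n → ℝ) → ℕ := fun x =>
    if h : x ∈ Xη then Nat.find (hP x h) else 0 with hr
  have hr_def : ∀ x (h : x ∈ Xη), r x = Nat.find (hP x h) := by
    intro x h; simp [hr, h]
  have hr_spec : ∀ x (h : x ∈ Xη), ∃ l, r x ≤ N l ∧ x ∈ C l (r x) := by
    intro x h; rw [hr_def x h]; exact Nat.find_spec (hP x h)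
  have hr_le : ∀ x (h : x ∈ Xη) (j : ℕ), (∃ l, j ≤ N l ∧ x ∈ C l j) → r x ≤ j := by
    intro x h j hj; rw [hr_def x h]; exact Nat.find_le hj
  -- key one-step lemma
  have key : ∀ x ∈ Xη, ∃ u ∈ U, ∀ w ∈ W,
      (A.mulVec x + B.mulVec u + w ∈ Xη ∧ r (A.mulVec x + B.mulVec u + w) ≤ r x - 1) := by
    intro x hx
    obtain ⟨l, hlN, hxC⟩ := hr_spec x hx
    rcases Nat.eq_zero_or_pos (r x) with h0 | hpos
    · rw [h0] at hxC
      obtain ⟨u, hu, hnext⟩ := hRCI l x hxC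
      refine ⟨u, hu, fun w hw => ?_⟩
      have h1 := hnext w hw
      have h2 : A.mulVec x + B.mulVec u + w ∈ Xη := hC0sub l h1
      refine ⟨h2, ?_⟩
      have := hr_le _ h2 0 ⟨l, Nat.zero_le _, h1⟩
      omega
    · obtain ⟨u, hu, hnext⟩ := hROSC l (r x) hpos hlN x hxC
      refine ⟨u, hu, fun w hw => ?_⟩
      have h1 := hnext w hw
      have h2 : A.mulVec x + B.mulVec u + w ∈ Xη := by
        rcases Nat.eq_zero_or_pos (r x - 1) with hz | hp
        · rw [hz] at h1; exact hC0sub l h1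
        · exact hCsub l (r x - 1) hp (le_trans (Nat.sub_le _ _) hlN) h1
      exact ⟨h2, hr_le _ h2 (r x - 1) ⟨l, le_trans (Nat.sub_le _ _) hlN, h1⟩⟩
  -- the feedback
  refine ⟨fun x => if h : x ∈ Xη then (key x h).choose else 0, ?_⟩
  intro w hw x hx0 hrec
  -- invariant
  have inv : ∀ k, x k ∈ Xη ∧ r (x k) ≤ r x₀ - k := by
    intro k
    induction k with
    | zero => exact ⟨hx0 ▸ hx₀, by simp [hx0]⟩
    | succ k ih =>
      obtain ⟨hmem, hrk⟩ := ih
      have spec := (key (x k) hmem).choose_spec.2 (w k) (hw k)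
      have heq : x (k + 1) =
          A.mulVec (x k) + B.mulVec ((key (x k) hmem).choose) + w k := by
        rw [hrec k]; simp [hmem]
      rw [heq]
      refine ⟨spec.1, le_trans spec.2 ?_⟩
      omega
  have hκU : ∀ k, (fun x => if h : x ∈ Xη then (key x h).choose else 0) (x k) ∈ U := by
    intro k
    have hmem := (inv k).1
    simp only [hmem, dif_pos]
    exact (key (x k) hmem).choose_spec.1
  refine ⟨hκU, r x₀, ?_, ?_, fun k' _ => (inv k').1⟩
  · obtain ⟨l, hlN, _⟩ := hr_spec x₀ hx₀
    exact le_trans hlN (Finset.le_sup (Finset.mem_univ l))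
  · have h0 : r (x (r x₀)) = 0 := by have := (inv (r x₀)).2; omega
    obtain ⟨l, _, hxC⟩ := hr_spec (x (r x₀)) (inv (r x₀)).1
    rw [h0] at hxC
    exact ⟨l, hxC⟩
end

section
/- If the true pair [A, B] satisfies X_+ = A X_− + B U_− + W_− for some noise matrix W_− whose columns lie in the zonotope Z_w, and the matrix [X_−; U_−] has full row rank n + m, then [A, B] belongs to the set (X_+ − M_w)·pinv([X_−; U_−]), where M_w is the matrix zonotope of all noise matrices with columns in Z_w and pinv denotes the right pseudo-inverse. -/
open Matrix

theorem Matrix.sub_mul_eq_of_eq_mul_add_of_mul_eq_one {l p q R : Type*} [Fintype p] [Fintype q]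
    [DecidableEq p] [Ring R] {M : Matrix l p R} {D : Matrix p q R} {Dp : Matrix q p R}
    {Y W : Matrix l q R} (hY : Y = M * D + W) (hD : D * Dp = 1) : (Y - W) * Dp = M := by
  rw [hY, add_sub_cancel_right, Matrix.mul_assoc, hD, Matrix.mul_one]

theorem true_system_matrices_in_data_driven_set_general
    {n m T : ℕ} (A : Matrix (Fin n) (Fin n) ℝ) (B : Matrix (Fin n) (Fin m) ℝ)
    (Xm : Matrix (Fin n) (Fin T) ℝ) (Um : Matrix (Fin m) (Fin T) ℝ)
    (Xp Wm : Matrix (Fin n) (Fin T) ℝ) (Zw : Set (Fin n → ℝ))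
    (hdata : Xp = A * Xm + B * Um + Wm)
    (hWcols : ∀ t : Fin T, (fun i => Wm i t) ∈ Zw)
    (Dp : Matrix (Fin T) (Fin n ⊕ Fin m) ℝ)
    (hpinv : fromRows Xm Um * Dp = 1) :
    fromCols A B ∈
      {M : Matrix (Fin n) (Fin n ⊕ Fin m) ℝ |
        ∃ W : Matrix (Fin n) (Fin T) ℝ,
          (∀ t : Fin T, (fun i => W i t) ∈ Zw) ∧ M = (Xp - W) * Dp} := by
  have hdata' : Xp = fromCols A B * fromRows Xm Um + Wm := by
    rw [hdata, fromCols_mul_fromRows]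
  exact ⟨Wm, hWcols, (sub_mul_eq_of_eq_mul_add_of_mul_eq_one hdata' hpinv).symm⟩

/-- If X_+ = A X_− + B U_− + W_− with the columns of W_− in the zonotope
Z_w, and D = [X_−; U_−] has a right pseudo-inverse D† (D D† = I, guaranteed by the full
row rank condition), then [A, B] ∈ (X_+ − M_w)·D†, where M_w is the set of noise
matrices with columns in Z_w. -/
theorem true_system_matrices_in_data_driven_set
    {n m T : ℕ} (A : Matrix (Fin n) (Fin n) ℝ) (B : Matrix (Fin n) (Fin m) ℝ)
    (Xm : Matrix (Fin n) (Fin T) ℝ) (Um : Matrix (Fin m) (Fin T) ℝ)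
    (Xp Wm : Matrix (Fin n) (Fin T) ℝ) (Zw : Set (Fin n → ℝ))
    (hdata : Xp = A * Xm + B * Um + Wm)
    (hWcols : ∀ t : Fin T, (fun i => Wm i t) ∈ Zw)
    (Dp : Matrix (Fin T) (Fin n ⊕ Fin m) ℝ)
    (hrank : (fromRows Xm Um).rank = n + m)
    (hpinv : fromRows Xm Um * Dp = 1) :
    fromCols A B ∈
      {M : Matrix (Fin n) (Fin n ⊕ Fin m) ℝ |
        ∃ W : Matrix (Fin n) (Fin T) ℝ,
          (∀ t : Fin T, (fun i => W i t) ∈ Zw) ∧ M = (Xp - W) * Dp} :=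
  true_system_matrices_in_data_driven_set_general A B Xm Um Xp Wm Zw hdata hWcols Dp hpinv
end
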